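/- arXiv:1903.07048 — 3 statements merged into one kernel-verified Lean document; each statement's English description precedes it below -/
import Mathlib

section
/- Let Y be a proper geodesic metric space, ρ a sublinear function, and Z ⊆ Y a closed ρ-contracting set. Let K' ≥ 1, C' ≥ 0 and let β : [0,∞) → Y be a continuous (K',C')-quasi-geodesic ray with d(β(0), Z) ≤ κ(ρ,K',C'). Then exactly one of the following holds: (1) the set {t ≥ 0 : d(β(t), Z) ≤ κ(ρ,K',C')} is unbounded, and every point of the image of β lies within distance κ'(ρ,K',C') of Z; or (2) the set {t ≥ 0 : d(β(t), Z) ≤ κ(ρ,K',C')} is bounded, and, letting T₀ be its maximum (which exists and satisfies d(β(T₀), Z) = κ(ρ,K',C')), one has d(β(t), Z) ≥ (1/(2K'))(t − T₀) − 2(C' + κ(ρ,K',C')) for all t ≥ 0. -/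
open Set Metric

/-- A function `ρ : ℝ → ℝ` (thought of as defined on `[0,∞)`) is sublinear:
non-decreasing (on `[0,∞)`), eventually non-negative, and `ρ r / r → 0`. -/
def Sublinear (ρ : ℝ → ℝ) : Prop :=
  MonotoneOn ρ (Ici 0) ∧ (∃ R : ℝ, ∀ r ≥ R, 0 ≤ ρ r) ∧
    Filter.Tendsto (fun r => ρ r / r) Filter.atTop (nhds 0)

/-- Closest-point projection of `y` onto `Z`. -/
def ClosestPoints {Y : Type*} [MetricSpace Y] (Z : Set Y) (y : Y) : Set Y :=
  {z ∈ Z | dist y z = infDist y Z}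

/-- `Z` is a `ρ`-contracting subset. -/
def IsContracting {Y : Type*} [MetricSpace Y] (ρ : ℝ → ℝ) (Z : Set Y) : Prop :=
  ∀ x y : Y, x ∉ Z → y ∉ Z → dist x y < infDist y Z →
    diam (ClosestPoints Z x ∪ ClosestPoints Z y) ≤ ρ (infDist y Z)

/-- `β : [0,∞) → Y` is a `(K,C)`-quasi-geodesic ray. -/
def IsQGRay {Y : Type*} [MetricSpace Y] (K C : ℝ) (β : ℝ → Y) : Prop :=
  ∀ s ≥ (0:ℝ), ∀ t ≥ (0:ℝ),
    (1/K) * |s - t| - C ≤ dist (β s) (β t) ∧ dist (β s) (β t) ≤ K * |s - t| + C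

/-- `α : [0,∞) → Y` is a geodesic ray (isometric embedding of `[0,∞)`). -/
def IsGeodesicRay {Y : Type*} [MetricSpace Y] (α : ℝ → Y) : Prop :=
  ∀ s ≥ (0:ℝ), ∀ t ≥ (0:ℝ), dist (α s) (α t) = |s - t|

/-- κ(ρ,K,C) = max(3K², 3C, 1 + inf{R ≥ 0 : 3K²ρ(r) ≤ r for all r ≥ R}). -/
noncomputable def kappa (ρ : ℝ → ℝ) (K C : ℝ) : ℝ :=
  max (max (3 * K ^ 2) (3 * C))
    (1 + sInf {R : ℝ | 0 ≤ R ∧ ∀ r ≥ R, 3 * K ^ 2 * ρ r ≤ r})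

/-- κ'(ρ,K,C) = (K²+2)(2κ(ρ,K,C)+C). -/
noncomputable def kappa' (ρ : ℝ → ℝ) (K C : ℝ) : ℝ :=
  (K ^ 2 + 2) * (2 * kappa ρ K C + C)

/-- A metric space is geodesic: any two points are joined by an isometric
embedding of a compact interval. -/
def GeodesicSpace (Y : Type*) [MetricSpace Y] : Prop :=
  ∀ x y : Y, ∃ γ : ℝ → Y, γ 0 = x ∧ γ (dist x y) = y ∧
    ∀ s ∈ Icc 0 (dist x y), ∀ t ∈ Icc 0 (dist x y), dist (γ s) (γ t) = |s - t|

/-!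
While `β` stays at distance at least `κ` from `Z`, cut it into pieces along which it moves by less
than its current distance `e` to `Z`. Contraction moves closest points by at most
`ρ e ≤ e / (3K²)` along each piece, and the quasi-geodesic upper bound makes every full piece
longer than `2e / (3K)`, so closest points drift by at most `1/(2K)` times the elapsed time.
The quasi-geodesic lower bound `(b - a)/K - C` on the displacement then bounds the length of an
excursion `[a, b]` away from the `κ`-neighbourhood linearly by the distances of `β a` and `β b`
to `Z`. Starting the excursion at the last time `T₀` in the neighbourhood gives linear escape;
an excursion between two returns has length `O(K κ)`, which bounds the distance to `Z` along it.
-/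

open Bornology Filter Topology

section ClosestPoints

variable {Y : Type*} [MetricSpace Y] {Z : Set Y}

lemma isBounded_closestPoints (x : Y) : IsBounded (ClosestPoints Z x) :=
  isBounded_closedBall.subset fun z hz => by
    rw [mem_closedBall, dist_comm]
    exact hz.2.le

lemma closestPoints_nonempty [ProperSpace Y] (hZ : IsClosed Z) (hne : Z.Nonempty) (x : Y) :
    (ClosestPoints Z x).Nonempty :=
  let ⟨z, hz, hxz⟩ := hZ.exists_infDist_eq_dist hne x
  ⟨z, hz, hxz.symm⟩

lemma isClosed_setOf_closestPoints_inter_closedBall_nonempty [ProperSpace Y] (hZ : IsClosed Z)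
    (q : Y) (r : ℝ) : IsClosed {x | (ClosestPoints Z x ∩ closedBall q r).Nonempty} := by
  refine IsSeqClosed.isClosed fun xs x hxs hlim => ?_
  choose p hp using hxs
  obtain ⟨p₀, hp₀, φ, hφ, hpφ⟩ :=
    ((isCompact_closedBall q r).inter_left hZ).tendsto_subseq fun n => ⟨(hp n).1.1, (hp n).2⟩
  have hxφ := hlim.comp hφ.tendsto_atTop
  have h₁ : Tendsto (fun n => dist (xs (φ n)) (p (φ n))) atTop (𝓝 (dist x p₀)) := hxφ.dist hpφ
  have h₂ : Tendsto (fun n => dist (xs (φ n)) (p (φ n))) atTop (𝓝 (infDist x Z)) :=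
    (((continuous_infDist_pt Z).tendsto x).comp hxφ).congr fun n => (hp (φ n)).1.2.symm
  exact ⟨p₀, ⟨hp₀.1, tendsto_nhds_unique h₁ h₂⟩, hp₀.2⟩

lemma IsContracting.dist_le {ρ : ℝ → ℝ} (hZ : IsContracting ρ Z) {x y p q : Y}
    (hxy : dist x y < infDist y Z) (hp : p ∈ ClosestPoints Z x) (hq : q ∈ ClosestPoints Z y) :
    dist p q ≤ ρ (infDist y Z) := by
  have hy : y ∉ Z := fun hy => by
    rw [infDist_zero_of_mem hy] at hxy
    exact (dist_nonneg.trans_lt hxy).false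
  have hx : x ∉ Z := fun hx =>
    (infDist_le_dist_of_mem hx).not_gt (by rwa [dist_comm] at hxy)
  exact (dist_le_diam_of_mem ((isBounded_closestPoints x).union (isBounded_closestPoints y))
    (Or.inl hp) (Or.inr hq)).trans (hZ x y hx hy hxy)

end ClosestPoints

section Crossing

variable {X : Type*} [TopologicalSpace X] {a b : ℝ}

lemma ContinuousOn.mem_of_mapsTo_Ioc {g : ℝ → X} {t : Set X} (hg : ContinuousOn g (Icc a b))
    (hab : a < b) (ht : IsClosed t) (h : MapsTo g (Ioc a b) t) : g a ∈ t := by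
  have := h.closure_of_continuousOn (by rwa [closure_Ioc hab.ne])
  rw [closure_Ioc hab.ne, ht.closure_eq] at this
  exact this (left_mem_Icc.2 hab.le)

lemma ContinuousOn.mem_of_mapsTo_Ico {g : ℝ → X} {t : Set X} (hg : ContinuousOn g (Icc a b))
    (hab : a < b) (ht : IsClosed t) (h : MapsTo g (Ico a b) t) : g b ∈ t := by
  have := h.closure_of_continuousOn (by rwa [closure_Ico hab.ne])
  rw [closure_Ico hab.ne, ht.closure_eq] at this
  exact this (right_mem_Icc.2 hab.le)

variable {f : ℝ → ℝ} {c : ℝ}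

lemma exists_mem_Ico_eq_forall_Icc_le (hf : ContinuousOn f (Icc a b)) (hab : a ≤ b)
    (ha : f a ≤ c) (hb : c < f b) : ∃ a' ∈ Ico a b, f a' = c ∧ ∀ s ∈ Icc a' b, c ≤ f s := by
  have hcl : IsClosed (Icc a b ∩ f ⁻¹' Iic c) :=
    hf.preimage_isClosed_of_isClosed isClosed_Icc isClosed_Iic
  obtain ⟨a', ⟨⟨haa', ha'b⟩, ha'c⟩, hmax⟩ :=
    (isCompact_Icc.of_isClosed_subset hcl inter_subset_left).exists_isGreatest
      ⟨a, left_mem_Icc.2 hab, ha⟩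
  have ha'b : a' < b := ha'b.lt_of_ne (by rintro rfl; exact hb.not_ge ha'c)
  have hgt : ∀ s ∈ Ioc a' b, c < f s := fun s hs =>
    lt_of_not_ge fun hsc => hs.1.not_ge (hmax ⟨⟨haa'.trans hs.1.le, hs.2⟩, hsc⟩)
  have hge : c ≤ f a' := (hf.mono (Icc_subset_Icc_left haa')).mem_of_mapsTo_Ioc ha'b isClosed_Ici
    fun s hs => (hgt s hs).le
  refine ⟨a', ⟨haa', ha'b⟩, le_antisymm ha'c hge, fun s hs => ?_⟩
  rcases hs.1.eq_or_lt with rfl | h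
  · exact hge
  · exact (hgt s ⟨h, hs.2⟩).le

lemma exists_mem_Ioc_eq_forall_Icc_le (hf : ContinuousOn f (Icc a b)) (hab : a ≤ b)
    (ha : c < f a) (hb : f b ≤ c) : ∃ b' ∈ Ioc a b, f b' = c ∧ ∀ s ∈ Icc a b', c ≤ f s := by
  have hcl : IsClosed (Icc a b ∩ f ⁻¹' Iic c) :=
    hf.preimage_isClosed_of_isClosed isClosed_Icc isClosed_Iic
  obtain ⟨b', ⟨⟨hab', hb'b⟩, hb'c⟩, hmin⟩ :=
    (isCompact_Icc.of_isClosed_subset hcl inter_subset_left).exists_isLeast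
      ⟨b, right_mem_Icc.2 hab, hb⟩
  have hab' : a < b' := hab'.lt_of_ne (by rintro rfl; exact ha.not_ge hb'c)
  have hgt : ∀ s ∈ Ico a b', c < f s := fun s hs =>
    lt_of_not_ge fun hsc => hs.2.not_ge (hmin ⟨⟨hs.1, hs.2.le.trans hb'b⟩, hsc⟩)
  have hge : c ≤ f b' := (hf.mono (Icc_subset_Icc_right hb'b)).mem_of_mapsTo_Ico hab' isClosed_Ici
    fun s hs => (hgt s hs).le
  refine ⟨b', ⟨hab', hb'b⟩, le_antisymm hb'c hge, fun s hs => ?_⟩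
  rcases hs.2.eq_or_lt with rfl | h
  · exact hge
  · exact (hgt s ⟨hs.1, h⟩).le

end Crossing

section QuasiGeodesic

variable {Y : Type*} [MetricSpace Y] {K C : ℝ} {β : ℝ → Y} {s t : ℝ}

lemma IsQGRay.dist_le (hβ : IsQGRay K C β) (hs : 0 ≤ s) (hst : s ≤ t) :
    dist (β s) (β t) ≤ K * (t - s) + C := by
  simpa only [abs_sub_comm s t, abs_of_nonneg (sub_nonneg.2 hst)] using
    (hβ s hs t (hs.trans hst)).2

lemma IsQGRay.le_dist (hβ : IsQGRay K C β) (hs : 0 ≤ s) (hst : s ≤ t) :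
    (t - s) / K - C ≤ dist (β s) (β t) := by
  simpa only [abs_sub_comm s t, abs_of_nonneg (sub_nonneg.2 hst), one_div_mul_eq_div] using
    (hβ s hs t (hs.trans hst)).1

end QuasiGeodesic

lemma one_le_kappa (ρ : ℝ → ℝ) (K C : ℝ) : 1 ≤ kappa ρ K C :=
  le_max_of_le_right (le_add_of_nonneg_right (Real.sInf_nonneg fun _ hR => hR.1))

lemma three_mul_le_kappa (ρ : ℝ → ℝ) (K C : ℝ) : 3 * C ≤ kappa ρ K C :=
  le_max_of_le_left (le_max_right _ _)

lemma Sublinear.eventually_mul_le {ρ : ℝ → ℝ} (hρ : Sublinear ρ) (c : ℝ) :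
    ∀ᶠ r in atTop, c * ρ r ≤ r := by
  have h : Tendsto (fun r => c * (ρ r / r)) atTop (𝓝 0) := by
    simpa only [mul_zero] using hρ.2.2.const_mul c
  filter_upwards [h.eventually_lt_const zero_lt_one, eventually_gt_atTop 0] with r hr hr0
  rw [← mul_div_assoc, div_lt_one hr0] at hr
  exact hr.le

lemma Sublinear.mul_le_of_kappa_le {ρ : ℝ → ℝ} (hρ : Sublinear ρ) {K C r : ℝ}
    (hr : kappa ρ K C ≤ r) : 3 * K ^ 2 * ρ r ≤ r := by
  set T := {R : ℝ | 0 ≤ R ∧ ∀ r ≥ R, 3 * K ^ 2 * ρ r ≤ r}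
  have hT : T.Nonempty := by
    obtain ⟨R, hR⟩ := eventually_atTop.1 (hρ.eventually_mul_le (3 * K ^ 2))
    exact ⟨max R 0, le_max_right _ _, fun r hr => hR r ((le_max_left _ _).trans hr)⟩
  have hTr : sInf T < r := by
    have : 1 + sInf T ≤ kappa ρ K C := le_max_right _ _
    linarith
  obtain ⟨R, hR, hRr⟩ := exists_lt_of_csInf_lt hT hTr
  exact hR.2 r hRr.le

section Excursion

variable {Y : Type*} [MetricSpace Y] [ProperSpace Y] {ρ : ℝ → ℝ} {Z : Set Y} {K C κ : ℝ}
  {β : ℝ → Y}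

lemma IsContracting.exists_closestPoints_near_of_forall_Ioc (hZcl : IsClosed Z)
    (hZ : IsContracting ρ Z) {c b : ℝ} (hβ : ContinuousOn β (Icc c b)) (hcb : c < b)
    (hnear : ∀ s ∈ Ioc c b, dist (β s) (β b) < infDist (β b) Z) {q : Y}
    (hq : q ∈ ClosestPoints Z (β b)) :
    ∃ p ∈ ClosestPoints Z (β c), dist p q ≤ ρ (infDist (β b) Z) := by
  obtain ⟨p, hp, hpq⟩ := hβ.mem_of_mapsTo_Ioc hcb
    (isClosed_setOf_closestPoints_inter_closedBall_nonempty hZcl q _) fun s hs => by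
      obtain ⟨p, hp⟩ := closestPoints_nonempty hZcl ⟨q, hq.1⟩ (β s)
      exact ⟨p, hp, mem_closedBall.2 (hZ.dist_le (hnear s hs) hp hq)⟩
  exact ⟨p, hp, mem_closedBall.1 hpq⟩

lemma exists_closestPoints_step (hZcl : IsClosed Z) (hZ : IsContracting ρ Z) (hK : 0 < K)
    (hβcont : ContinuousOn β (Ici 0)) (hβ : IsQGRay K C β) (hκ : 0 < κ) (hκC : 3 * C ≤ κ)
    (hκρ : ∀ r, κ ≤ r → 3 * K ^ 2 * ρ r ≤ r) {a b : ℝ} (ha : 0 ≤ a) (hab : a ≤ b)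
    (hfar : κ ≤ infDist (β b) Z) {q : Y} (hq : q ∈ ClosestPoints Z (β b)) :
    (∃ p ∈ ClosestPoints Z (β a),
        dist p q ≤ (b - a) / (2 * K) + (C + infDist (β a) Z) / (3 * K ^ 2)) ∨
      ∃ s ∈ Icc a (b - 2 * κ / (3 * K)), ∃ q' ∈ ClosestPoints Z (β s),
        dist q' q ≤ (b - s) / (2 * K) := by
  set e := infDist (β b) Z
  have hρe : ρ e ≤ e / (3 * K ^ 2) := by
    rw [le_div_iff₀ (by positivity)]
    linarith [hκρ e hfar]
  set E := Icc a b ∩ (fun s => dist (β s) (β b)) ⁻¹' Ici e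
  rcases E.eq_empty_or_nonempty with hE | hE
  · left
    have hnear : dist (β a) (β b) < e := lt_of_not_ge fun h =>
      (eq_empty_iff_forall_notMem.1 hE) a ⟨left_mem_Icc.2 hab, h⟩
    obtain ⟨p, hp⟩ := closestPoints_nonempty hZcl ⟨q, hq.1⟩ (β a)
    refine ⟨p, hp, (hZ.dist_le hnear hp hq).trans (hρe.trans ?_)⟩
    have he : e ≤ infDist (β a) Z + dist (β b) (β a) := infDist_le_infDist_add_dist
    rw [dist_comm] at he
    calc e / (3 * K ^ 2) ≤ (K * (b - a) + (C + infDist (β a) Z)) / (3 * K ^ 2) := by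
          gcongr
          linarith [hβ.dist_le ha hab]
      _ = (b - a) / (3 * K) + (C + infDist (β a) Z) / (3 * K ^ 2) := by
          field_simp
      _ ≤ (b - a) / (2 * K) + (C + infDist (β a) Z) / (3 * K ^ 2) := by
          gcongr
          linarith
  · right
    -- `s` is the last time at which `β` is still `e`-far from `β b`: contraction applies on
    -- `(s, b]`, and at `s` itself by closedness.
    have hβab : ContinuousOn β (Icc a b) := hβcont.mono fun u hu => ha.trans hu.1
    have hEcl : IsClosed E :=
      ((continuous_id.dist continuous_const).comp_continuousOn hβab).preimage_isClosed_of_isClosed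
        isClosed_Icc isClosed_Ici
    obtain ⟨s, ⟨⟨has, hsb⟩, hse⟩, hmax⟩ :=
      (isCompact_Icc.of_isClosed_subset hEcl inter_subset_left).exists_isGreatest hE
    have hstep : 2 * e / 3 ≤ K * (b - s) := by
      have : e ≤ dist (β s) (β b) := hse
      linarith [hβ.dist_le (ha.trans has) hsb]
    have hsb' : s < b := by
      by_contra h
      nlinarith
    have hnear : ∀ u ∈ Ioc s b, dist (β u) (β b) < e := fun u hu =>
      lt_of_not_ge fun h => hu.1.not_ge (hmax ⟨⟨has.trans hu.1.le, hu.2⟩, h⟩)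
    obtain ⟨q', hq', hq'q⟩ := hZ.exists_closestPoints_near_of_forall_Ioc hZcl
      (hβab.mono (Icc_subset_Icc_left has)) hsb' hnear hq
    refine ⟨s, ⟨has, ?_⟩, q', hq', hq'q.trans (hρe.trans ?_)⟩
    · have : 2 * κ / (3 * K) ≤ b - s := by
        rw [div_le_iff₀ (by positivity)]
        linarith
      linarith
    · rw [div_le_div_iff₀ (by positivity) (by positivity)]
      nlinarith [mul_le_mul_of_nonneg_left hstep hK.le]

lemma exists_closestPoints_dist_le_of_forall_Icc (hZcl : IsClosed Z) (hZ : IsContracting ρ Z)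
    (hK : 0 < K) (hβcont : ContinuousOn β (Ici 0)) (hβ : IsQGRay K C β) (hκ : 0 < κ)
    (hκC : 3 * C ≤ κ) (hκρ : ∀ r, κ ≤ r → 3 * K ^ 2 * ρ r ≤ r) (n : ℕ) {a b : ℝ} (ha : 0 ≤ a)
    (hab : a ≤ b) (hlen : b - a ≤ n * (2 * κ / (3 * K)))
    (hfar : ∀ s ∈ Icc a b, κ ≤ infDist (β s) Z) {q : Y} (hq : q ∈ ClosestPoints Z (β b)) :
    ∃ p ∈ ClosestPoints Z (β a),
      dist p q ≤ (b - a) / (2 * K) + (C + infDist (β a) Z) / (3 * K ^ 2) := by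
  have hδ : 0 < 2 * κ / (3 * K) := by positivity
  induction n generalizing b q with
  | zero =>
    rcases exists_closestPoints_step hZcl hZ hK hβcont hβ hκ hκC hκρ ha hab
      (hfar b (right_mem_Icc.2 hab)) hq with h | ⟨s, hs, -⟩
    · exact h
    · simp only [CharP.cast_eq_zero, zero_mul] at hlen
      linarith [hs.1, hs.2]
  | succ m ih =>
    rcases exists_closestPoints_step hZcl hZ hK hβcont hβ hκ hκC hκρ ha hab
      (hfar b (right_mem_Icc.2 hab)) hq with h | ⟨s, ⟨has, hsb⟩, q', hq', hq'q⟩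
    · exact h
    · obtain ⟨p, hp, hpq'⟩ := ih has (by push_cast at hlen; linarith)
        (fun u hu => hfar u ⟨hu.1, hu.2.trans (by linarith)⟩) hq'
      refine ⟨p, hp, (dist_triangle p q' q).trans ?_⟩
      have : (s - a) / (2 * K) + (b - s) / (2 * K) = (b - a) / (2 * K) := by
        rw [← add_div]
        ring_nf
      linarith

lemma sub_div_le_of_forall_Icc_le_infDist (hZcl : IsClosed Z) (hZ : IsContracting ρ Z)
    (hK : 0 < K) (hβcont : ContinuousOn β (Ici 0)) (hβ : IsQGRay K C β) (hκ : 0 < κ)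
    (hκC : 3 * C ≤ κ) (hκρ : ∀ r, κ ≤ r → 3 * K ^ 2 * ρ r ≤ r) {a b : ℝ} (ha : 0 ≤ a)
    (hab : a ≤ b) (hfar : ∀ s ∈ Icc a b, κ ≤ infDist (β s) Z) :
    (b - a) / (2 * K) ≤
      infDist (β a) Z + infDist (β b) Z + C + (C + infDist (β a) Z) / (3 * K ^ 2) := by
  have hZne : Z.Nonempty := by
    rw [nonempty_iff_ne_empty]
    rintro rfl
    linarith [hfar b (right_mem_Icc.2 hab), infDist_empty (x := β b)]
  obtain ⟨q, hq⟩ := closestPoints_nonempty hZcl hZne (β b)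
  obtain ⟨n, hn⟩ := exists_nat_ge ((b - a) / (2 * κ / (3 * K)))
  obtain ⟨p, hp, hpq⟩ := exists_closestPoints_dist_le_of_forall_Icc hZcl hZ hK hβcont hβ hκ hκC
    hκρ n ha hab (by rwa [div_le_iff₀ (by positivity)] at hn) hfar hq
  have hab' : dist (β a) (β b) ≤ infDist (β a) Z + dist p q + infDist (β b) Z :=
    calc dist (β a) (β b) ≤ dist (β a) p + dist p q + dist q (β b) := dist_triangle4 _ _ _ _
      _ = _ := by rw [hp.2, dist_comm q, hq.2]
  have hhalf : (b - a) / K = (b - a) / (2 * K) + (b - a) / (2 * K) := by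
    field_simp
    ring
  linarith [hβ.le_dist ha hab]

end Excursion

section Dichotomy

variable {Y : Type*} [MetricSpace Y] [ProperSpace Y] {ρ : ℝ → ℝ} {Z : Set Y} {K C κ : ℝ}
  {β : ℝ → Y}

lemma infDist_le_of_not_bddAbove (hZcl : IsClosed Z) (hZ : IsContracting ρ Z) (hK : 0 < K)
    (hC : 0 ≤ C) (hβcont : ContinuousOn β (Ici 0)) (hβ : IsQGRay K C β) (hκ : 0 < κ)
    (hκC : 3 * C ≤ κ) (hκρ : ∀ r, κ ≤ r → 3 * K ^ 2 * ρ r ≤ r) (h0 : infDist (β 0) Z ≤ κ)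
    (hS : ¬BddAbove {t : ℝ | 0 ≤ t ∧ infDist (β t) Z ≤ κ}) {t : ℝ} (ht : 0 ≤ t) :
    infDist (β t) Z ≤ (K ^ 2 + 2) * (2 * κ + C) := by
  rcases le_or_gt (infDist (β t) Z) κ with htκ | htκ
  · exact htκ.trans (by nlinarith [sq_nonneg K])
  have hf : ContinuousOn (fun s => infDist (β s) Z) (Ici 0) :=
    (continuous_infDist_pt Z).comp_continuousOn hβcont
  obtain ⟨u, ⟨-, huκ⟩, htu⟩ := not_bddAbove_iff.1 hS t
  obtain ⟨a, ⟨ha, hat⟩, haκ, hfarL⟩ :=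
    exists_mem_Ico_eq_forall_Icc_le (hf.mono fun s hs => hs.1) ht h0 htκ
  obtain ⟨b, ⟨htb, -⟩, hbκ, hfarR⟩ :=
    exists_mem_Ioc_eq_forall_Icc_le (hf.mono fun s hs => ht.trans hs.1) htu.le htκ huκ
  have hlen := sub_div_le_of_forall_Icc_le_infDist hZcl hZ hK hβcont hβ hκ hκC hκρ ha
    (hat.le.trans htb.le) fun s hs =>
      (le_total s t).elim (fun h => hfarL s ⟨hs.1, h⟩) (fun h => hfarR s ⟨h, hs.2⟩)
  rw [haκ, hbκ] at hlen
  have hKlen : K * (b - a) ≤ 2 * K ^ 2 * (2 * κ + C) + 2 * (C + κ) / 3 := by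
    calc K * (b - a) = 2 * K ^ 2 * ((b - a) / (2 * K)) := by field_simp
      _ ≤ 2 * K ^ 2 * (κ + κ + C + (C + κ) / (3 * K ^ 2)) := by gcongr
      _ = 2 * K ^ 2 * (2 * κ + C) + 2 * (C + κ) / 3 := by field_simp; ring
  have hleft : infDist (β t) Z ≤ κ + (K * (t - a) + C) := by
    calc infDist (β t) Z ≤ infDist (β a) Z + dist (β t) (β a) := infDist_le_infDist_add_dist
      _ ≤ κ + (K * (t - a) + C) := by
          rw [haκ, dist_comm]
          exact add_le_add_right (hβ.dist_le ha hat.le) κ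
  have hright : infDist (β t) Z ≤ κ + (K * (b - t) + C) := by
    calc infDist (β t) Z ≤ infDist (β b) Z + dist (β t) (β b) := infDist_le_infDist_add_dist
      _ ≤ κ + (K * (b - t) + C) := by
          rw [hbκ]
          exact add_le_add_right (hβ.dist_le ht htb.le) κ
  linarith

lemma exists_isGreatest_of_bddAbove (hZcl : IsClosed Z) (hZ : IsContracting ρ Z) (hK : 1 ≤ K)
    (hC : 0 ≤ C) (hβcont : ContinuousOn β (Ici 0)) (hβ : IsQGRay K C β) (hκ : 0 < κ)
    (hκC : 3 * C ≤ κ) (hκρ : ∀ r, κ ≤ r → 3 * K ^ 2 * ρ r ≤ r) (h0 : infDist (β 0) Z ≤ κ)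
    (hS : BddAbove {t : ℝ | 0 ≤ t ∧ infDist (β t) Z ≤ κ}) :
    ∃ T₀ : ℝ, IsGreatest {t : ℝ | 0 ≤ t ∧ infDist (β t) Z ≤ κ} T₀ ∧ infDist (β T₀) Z = κ ∧
      ∀ t ≥ (0:ℝ), (1 / (2 * K)) * (t - T₀) - 2 * (C + κ) ≤ infDist (β t) Z := by
  have hf : ContinuousOn (fun s => infDist (β s) Z) (Ici 0) :=
    (continuous_infDist_pt Z).comp_continuousOn hβcont
  have hScl : IsClosed {t : ℝ | 0 ≤ t ∧ infDist (β t) Z ≤ κ} :=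
    hf.preimage_isClosed_of_isClosed isClosed_Ici isClosed_Iic
  obtain ⟨T₀, hT₀⟩ : ∃ T₀, IsGreatest {t : ℝ | 0 ≤ t ∧ infDist (β t) Z ≤ κ} T₀ :=
    ⟨_, hScl.csSup_mem ⟨0, le_rfl, h0⟩ hS, fun _ h => le_csSup hS h⟩
  have hgt : ∀ s, T₀ < s → κ < infDist (β s) Z := fun s hs =>
    lt_of_not_ge fun h => hs.not_ge (hT₀.2 ⟨hT₀.1.1.trans hs.le, h⟩)
  have hT₀κ : infDist (β T₀) Z = κ := le_antisymm hT₀.1.2 <|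
    (hf.mono fun s hs => hT₀.1.1.trans hs.1).mem_of_mapsTo_Ioc (lt_add_one T₀) isClosed_Ici
      fun s hs => (hgt s hs.1).le
  refine ⟨T₀, hT₀, hT₀κ, fun t ht => ?_⟩
  rw [one_div_mul_eq_div]
  rcases le_or_gt t T₀ with htT | htT
  · have : (t - T₀) / (2 * K) ≤ 0 := div_nonpos_of_nonpos_of_nonneg (by linarith) (by positivity)
    linarith [infDist_nonneg (x := β t) (s := Z)]
  have hlen := sub_div_le_of_forall_Icc_le_infDist hZcl hZ (by positivity) hβcont hβ hκ hκC hκρ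
    hT₀.1.1 htT.le fun s hs => hs.1.eq_or_lt.elim (fun h => h ▸ hT₀κ.ge) fun h => (hgt s h).le
  rw [hT₀κ] at hlen
  have : (C + κ) / (3 * K ^ 2) ≤ C + κ := div_le_self (by linarith) (by nlinarith)
  linarith

end Dichotomy

theorem contracting_dichotomy_general {Y : Type*} [MetricSpace Y] [ProperSpace Y]
    (ρ : ℝ → ℝ) (hρ : Sublinear ρ)
    (Z : Set Y) (hZcl : IsClosed Z) (hZ : IsContracting ρ Z)
    (K' C' : ℝ) (hK' : 1 ≤ K') (hC' : 0 ≤ C')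
    (β : ℝ → Y) (hβcont : ContinuousOn β (Ici 0)) (hβ : IsQGRay K' C' β)
    (hstart : infDist (β 0) Z ≤ kappa ρ K' C') :
    (¬ BddAbove {t : ℝ | 0 ≤ t ∧ infDist (β t) Z ≤ kappa ρ K' C'} ∧
      ∀ t ≥ (0:ℝ), infDist (β t) Z ≤ kappa' ρ K' C') ∨
    (BddAbove {t : ℝ | 0 ≤ t ∧ infDist (β t) Z ≤ kappa ρ K' C'} ∧
      ∃ T₀ : ℝ, IsGreatest {t : ℝ | 0 ≤ t ∧ infDist (β t) Z ≤ kappa ρ K' C'} T₀ ∧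
        infDist (β T₀) Z = kappa ρ K' C' ∧
        ∀ t ≥ (0:ℝ),
          (1 / (2 * K')) * (t - T₀) - 2 * (C' + kappa ρ K' C') ≤ infDist (β t) Z) := by
  have hκ : 0 < kappa ρ K' C' := zero_lt_one.trans_le (one_le_kappa ρ K' C')
  have hκρ : ∀ r, kappa ρ K' C' ≤ r → 3 * K' ^ 2 * ρ r ≤ r := fun _ => hρ.mul_le_of_kappa_le
  by_cases hS : BddAbove {t : ℝ | 0 ≤ t ∧ infDist (β t) Z ≤ kappa ρ K' C'}
  · exact Or.inr ⟨hS, exists_isGreatest_of_bddAbove hZcl hZ hK' hC' hβcont hβ hκ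
      (three_mul_le_kappa ρ K' C') hκρ hstart hS⟩
  · exact Or.inl ⟨hS, fun t ht => infDist_le_of_not_bddAbove hZcl hZ (by positivity) hC' hβcont
      hβ hκ (three_mul_le_kappa ρ K' C') hκρ hstart hS ht⟩

/-- Cashen–Mackay, Corollary 4.3: dichotomy for a continuous quasi-geodesic ray
starting κ-close to a `ρ`-contracting closed set `Z`: either it stays within the
closed `κ`-neighbourhood of `Z` at an unbounded set of times and its whole image is
within `κ'` of `Z`, or it eventually escapes `Z` at a definite linear rate after the
last time `T₀` at which it is at distance exactly `κ` from `Z`. -/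
theorem contracting_dichotomy {Y : Type*} [MetricSpace Y] [ProperSpace Y]
    (hY : GeodesicSpace Y)
    (ρ : ℝ → ℝ) (hρ : Sublinear ρ)
    (Z : Set Y) (hZcl : IsClosed Z) (hZ : IsContracting ρ Z)
    (K' C' : ℝ) (hK' : 1 ≤ K') (hC' : 0 ≤ C')
    (β : ℝ → Y) (hβcont : ContinuousOn β (Ici 0)) (hβ : IsQGRay K' C' β)
    (hstart : infDist (β 0) Z ≤ kappa ρ K' C') :
    (¬ BddAbove {t : ℝ | 0 ≤ t ∧ infDist (β t) Z ≤ kappa ρ K' C'} ∧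
      ∀ t ≥ (0:ℝ), infDist (β t) Z ≤ kappa' ρ K' C') ∨
    (BddAbove {t : ℝ | 0 ≤ t ∧ infDist (β t) Z ≤ kappa ρ K' C'} ∧
      ∃ T₀ : ℝ, IsGreatest {t : ℝ | 0 ≤ t ∧ infDist (β t) Z ≤ kappa ρ K' C'} T₀ ∧
        infDist (β T₀) Z = kappa ρ K' C' ∧
        ∀ t ≥ (0:ℝ),
          (1 / (2 * K')) * (t - T₀) - 2 * (C' + kappa ρ K' C') ≤ infDist (β t) Z) :=
  contracting_dichotomy_general ρ hρ Z hZcl hZ K' C' hK' hC' β hβcont hβ hstart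
end

section
/- Let Y be a proper geodesic metric space with the Busemann convexity property that for any two geodesic rays β, β' : [0,∞) → Y the function t ↦ d(β(t), β'(t)) is convex. Let o, o' ∈ Y, let ρ be a sublinear function, and let α, α' : [0,∞) → Y be ρ-contracting geodesic rays with α(0) = o, α'(0) = o' and sup_{t≥0} d(α(t), α'(t)) < ∞. Then for every R ≥ 0 there exists R' ≥ 0, depending only on ρ, R and d(o,o'), with the following property: for all geodesic rays β, β' : [0,∞) → Y with β(0) = o, β'(0) = o' and sup_{t≥0} d(β(t), β'(t)) < ∞, if the image of β' intersects the closed κ(ρ,1,0)-neighbourhood of (im α') ∖ B(o', R'), then the image of β intersects the closed κ(ρ,1,0)-neighbourhood of (im α) ∖ B(o, R). (This is the quantitative core of the statement that the topology FG of fellow-traveling geodesics on the Morse boundary of a CAT(0) space is independent of the choice of base point.) -/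
/-!
Busemann convexity makes `t ↦ d(α t, α' t)` and `t ↦ d(β t, β' t)` convex; being bounded, they
are bounded by their value `d(o, o')` at `0`. If `β' t₀` is `κ`-close to `α' s₀`, then
`|t₀ - s₀| ≤ κ`, hence `d(α t₀, β t₀) ≤ 2(κ + d(o, o'))`. As `t ↦ d(α t, β t)` is convex and
vanishes at `0`, it is at most `κ` at time `b t₀` with `b = κ / (2(κ + d(o, o')))`, and the choice
`R' = κ + 2(κ + d(o, o')) R / κ` makes `b t₀ ≥ R`.
-/

open Set Metric

lemma kappa_pos (ρ : ℝ → ℝ) {K : ℝ} (hK : K ≠ 0) (C : ℝ) : 0 < kappa ρ K C :=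
  (by positivity : 0 < 3 * K ^ 2).trans_le ((le_max_left _ _).trans (le_max_left _ _))

lemma ConvexOn.le_left_of_bddAbove {g : ℝ → ℝ} {a B : ℝ} (hg : ConvexOn ℝ (Ici a) g)
    (hB : ∀ t ≥ a, g t ≤ B) {t : ℝ} (ht : a ≤ t) : g t ≤ g a := by
  by_contra! hlt
  have hat : a < t := ht.lt_of_ne (by rintro rfl; exact hlt.false)
  set c := (g t - g a) / (t - a)
  have hc : 0 < c := div_pos (by linarith) (by linarith)
  set z := t + (B - g t + 1) / c
  have htz : t < z := lt_add_of_pos_right t (div_pos (by linarith [hB t ht]) hc)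
  -- past `t` the graph of `g` stays above the secant line of slope `c > 0`
  have hslope : c ≤ (g z - g t) / (z - t) :=
    hg.slope_mono_adjacent (mem_Ici.2 le_rfl) (mem_Ici.2 (ht.trans htz.le)) hat htz
  rw [le_div_iff₀ (by linarith), show z - t = (B - g t + 1) / c by simp [z],
    mul_div_cancel₀ _ hc.ne'] at hslope
  linarith [hB z (ht.trans htz.le)]

lemma ConvexOn.apply_mul_le {g : ℝ → ℝ} (hg : ConvexOn ℝ (Ici 0) g) (h0 : g 0 ≤ 0)
    {b t : ℝ} (hb₀ : 0 ≤ b) (hb₁ : b ≤ 1) (ht : 0 ≤ t) : g (b * t) ≤ b * g t := by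
  have h := hg.2 (mem_Ici.2 le_rfl) (mem_Ici.2 ht) (sub_nonneg.2 hb₁) hb₀ (by ring)
  simp only [smul_eq_mul, mul_zero, zero_add] at h
  nlinarith

section

variable {Y : Type*} [MetricSpace Y] {α β α' β' : ℝ → Y}

lemma dist_le_dist_apply_zero_of_convexOn (hconv : ConvexOn ℝ (Ici 0) fun t => dist (α t) (β t))
    (hbdd : ∃ B, ∀ t ≥ (0 : ℝ), dist (α t) (β t) ≤ B) {t : ℝ} (ht : 0 ≤ t) :
    dist (α t) (β t) ≤ dist (α 0) (β 0) :=
  hconv.le_left_of_bddAbove hbdd.choose_spec ht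

namespace IsGeodesicRay

lemma dist_apply_zero (hα : IsGeodesicRay α) {t : ℝ} (ht : 0 ≤ t) : dist (α t) (α 0) = t := by
  rw [hα t ht 0 le_rfl, sub_zero, abs_of_nonneg ht]

lemma isClosed_image (hα : IsGeodesicRay α) : IsClosed (α '' Ici 0) := by
  have hiso : Isometry (fun t : Ici (0 : ℝ) => α t) :=
    Isometry.of_dist_eq fun s t => (hα s s.2 t t.2).trans (Subtype.dist_eq s t).symm
  have : CompleteSpace (Ici (0 : ℝ)) := isClosed_Ici.completeSpace_coe
  simpa [← image_eq_range] using hiso.isClosedEmbedding.isClosed_range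

lemma apply_mem_image_diff_ball (hα : IsGeodesicRay α) {r t : ℝ} (ht : 0 ≤ t) (hrt : r ≤ t) :
    α t ∈ α '' Ici 0 \ ball (α 0) r :=
  ⟨⟨t, ht, rfl⟩, by simpa [hα.dist_apply_zero ht] using hrt⟩

lemma exists_dist_le_of_infDist_image_diff_ball_le [ProperSpace Y] (hα : IsGeodesicRay α)
    {x : Y} {r κ : ℝ} (hr : 0 ≤ r) (hx : infDist x (α '' Ici 0 \ ball (α 0) r) ≤ κ) :
    ∃ s ≥ r, dist x (α s) ≤ κ := by
  obtain ⟨p, ⟨⟨s, hs, rfl⟩, hsr⟩, hp⟩ :=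
    (hα.isClosed_image.sdiff isOpen_ball).exists_infDist_eq_dist
      ⟨α r, hα.apply_mem_image_diff_ball hr le_rfl⟩ x
  refine ⟨s, ?_, hp ▸ hx⟩
  simpa [hα.dist_apply_zero (mem_Ici.1 hs)] using hsr

lemma abs_sub_le_of_dist_le (hα : IsGeodesicRay α) (hβ : IsGeodesicRay β) (h0 : α 0 = β 0)
    {s t κ : ℝ} (hs : 0 ≤ s) (ht : 0 ≤ t) (hst : dist (α s) (β t) ≤ κ) : |s - t| ≤ κ := by
  have h := abs_dist_sub_le (α s) (β t) (α 0)
  rw [hα.dist_apply_zero hs, h0, hβ.dist_apply_zero ht] at h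
  exact h.trans hst

lemma exists_infDist_image_diff_ball_le (hα : IsGeodesicRay α) (hα' : IsGeodesicRay α')
    (hβ' : IsGeodesicRay β') (hαβ : ConvexOn ℝ (Ici 0) fun t => dist (α t) (β t))
    (hβ0 : β 0 = α 0) (hβ'0 : β' 0 = α' 0)
    {D κ R t₀ s₀ : ℝ} (hαα' : ∀ t ≥ (0 : ℝ), dist (α t) (α' t) ≤ D)
    (hββ' : ∀ t ≥ (0 : ℝ), dist (β t) (β' t) ≤ D) (hκ : 0 < κ) (hR : 0 ≤ R) (ht₀ : 0 ≤ t₀)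
    (hs₀ : κ + 2 * (κ + D) * R / κ ≤ s₀) (hnear : dist (β' t₀) (α' s₀) ≤ κ) :
    ∃ t ≥ (0 : ℝ), infDist (β t) (α '' Ici 0 \ ball (α 0) R) ≤ κ := by
  have hD : 0 ≤ D := dist_nonneg.trans (hαα' 0 le_rfl)
  have hs₀0 : 0 ≤ s₀ := by linarith [show 0 ≤ 2 * (κ + D) * R / κ by positivity]
  have hts := abs_le.1 (hβ'.abs_sub_le_of_dist_le hα' hβ'0 ht₀ hs₀0 hnear)
  have hfar : dist (α t₀) (β t₀) ≤ 2 * (κ + D) := calc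
    dist (α t₀) (β t₀) ≤ dist (α t₀) (α' t₀) + dist (α' t₀) (α' s₀) + dist (α' s₀) (β' t₀)
        + dist (β' t₀) (β t₀) :=
      (dist_triangle _ (β' t₀) _).trans (by gcongr; exact dist_triangle4 _ _ _ _)
    _ ≤ D + κ + κ + D := by
      rw [hα' t₀ ht₀ s₀ hs₀0, dist_comm (α' s₀) (β' t₀), dist_comm (β' t₀) (β t₀)]
      linarith [hαα' t₀ ht₀, hββ' t₀ ht₀, abs_le.2 hts]
    _ = 2 * (κ + D) := by ring
  set b := κ / (2 * (κ + D))
  have hb : b * (2 * (κ + D)) = κ := div_mul_cancel₀ _ (by positivity)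
  have hb₁ : b ≤ 1 := (div_le_one (by positivity)).2 (by linarith)
  have hnear₁ : dist (α (b * t₀)) (β (b * t₀)) ≤ κ := calc
    _ ≤ b * dist (α t₀) (β t₀) := hαβ.apply_mul_le (by simp [hβ0]) (by positivity) hb₁ ht₀
    _ ≤ b * (2 * (κ + D)) := by gcongr
    _ = κ := hb
  have hRt₁ : R ≤ b * t₀ := by
    have h : 2 * (κ + D) * R / κ ≤ t₀ := by linarith
    rw [div_le_iff₀ hκ] at h
    nlinarith
  refine ⟨b * t₀, by positivity, ?_⟩
  calc infDist (β (b * t₀)) _ ≤ dist (β (b * t₀)) (α (b * t₀)) :=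
        infDist_le_dist_of_mem (hα.apply_mem_image_diff_ball (by positivity) hRt₁)
    _ ≤ κ := by rwa [dist_comm]

end IsGeodesicRay

end

/-- Base-point independence of the topology `FG` (quantitative core, Proposition 2.4):
there is a function `F` assigning to `(ρ, R, d(o,o'))` a radius `R' ≥ 0` such that, in
any proper geodesic Busemann-convex space, for `ρ`-contracting geodesic rays `α, α'`
based at `o, o'` at bounded distance from each other, any pair of asymptotically
equivalent geodesic rays `β, β'` based at `o, o'` such that `β'` meets the closed
`κ(ρ,1,0)`-neighbourhood of `(im α') ∖ B(o', R')` has `β` meeting the closed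
`κ(ρ,1,0)`-neighbourhood of `(im α) ∖ B(o, R)`. -/
theorem FG_basepoint_independence :
    ∃ F : (ℝ → ℝ) → ℝ → ℝ → ℝ,
      ∀ (Y : Type*) [MetricSpace Y] [ProperSpace Y], GeodesicSpace Y →
        (∀ β β' : ℝ → Y, IsGeodesicRay β → IsGeodesicRay β' →
          ConvexOn ℝ (Ici 0) (fun t => dist (β t) (β' t))) →
        ∀ (o o' : Y) (ρ : ℝ → ℝ), Sublinear ρ →
        ∀ (α α' : ℝ → Y),
          IsGeodesicRay α → IsGeodesicRay α' → α 0 = o → α' 0 = o' →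
          IsContracting ρ (α '' Ici 0) → IsContracting ρ (α' '' Ici 0) →
          (∃ B : ℝ, ∀ t ≥ (0:ℝ), dist (α t) (α' t) ≤ B) →
        ∀ R ≥ (0:ℝ),
          0 ≤ F ρ R (dist o o') ∧
          ∀ (β β' : ℝ → Y),
            IsGeodesicRay β → IsGeodesicRay β' → β 0 = o → β' 0 = o' →
            (∃ B : ℝ, ∀ t ≥ (0:ℝ), dist (β t) (β' t) ≤ B) →
            (∃ t ≥ (0:ℝ),
              infDist (β' t) ((α' '' Ici 0) \ ball o' (F ρ R (dist o o'))) ≤ kappa ρ 1 0) →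
            ∃ t ≥ (0:ℝ), infDist (β t) ((α '' Ici 0) \ ball o R) ≤ kappa ρ 1 0 := by
  refine ⟨fun ρ R d => kappa ρ 1 0 + 2 * (kappa ρ 1 0 + d) * R / kappa ρ 1 0, ?_⟩
  intro Y _ _ _ hconv o o' ρ _ α α' hα hα' hαo hα'o' _ _ hαα' R hR
  subst hαo hα'o'
  have hκ := kappa_pos ρ one_ne_zero 0
  refine ⟨by positivity, ?_⟩
  rintro β β' hβ hβ' hβ0 hβ'0 hββ' ⟨t₀, ht₀, hnear⟩
  obtain ⟨s₀, hs₀, hs₀near⟩ :=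
    hα'.exists_dist_le_of_infDist_image_diff_ball_le (by positivity) hnear
  have hββ'D (t : ℝ) (ht : 0 ≤ t) : dist (β t) (β' t) ≤ dist (α 0) (α' 0) := by
    simpa [hβ0, hβ'0] using dist_le_dist_apply_zero_of_convexOn (hconv β β' hβ hβ') hββ' ht
  exact hα.exists_infDist_image_diff_ball_le hα' hβ' (hconv α β hα hβ) hβ0 hβ'0
    (fun t => dist_le_dist_apply_zero_of_convexOn (hconv α α' hα hα') hαα') hββ'D hκ hR ht₀
    hs₀ hs₀near
end

section
/- Let (Y, T) be a T1 topological space, let (U_n)_{n∈ℕ} be a countable basis of T, and for each n let f_n : Y → ℝ be a continuous function with 0 ≤ f_n(y) ≤ e^{−n} for all y and with support contained in U_n. Assume moreover that for every y ∈ Y and every open set U ∈ T with y ∈ U there exists n such that f_n(y) ≠ 0 and the support of f_n is contained in U. Then d(x,y) := sup_n |f_n(x) − f_n(y)| defines a metric on Y, and the topology induced by d equals T. -/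
open Set

/-- Explicit metrization lemma (core of the Urysohn metrization theorem): given a T1
space `Y`, a countable basis `(U n)`, and continuous functions `f n : Y → [0, e^{−n}]`
supported in `U n` such that every neighbourhood of every point contains the support
of some `f n` not vanishing at that point, the formula
`D x y = ⨆ n, |f n x − f n y|` defines a metric on `Y` inducing the given topology
(expressed via the neighbourhood filters). -/
theorem urysohn_metrization_lemma {Y : Type*} [TopologicalSpace Y] [T1Space Y]
    (U : ℕ → Set Y)
    (hbasis : TopologicalSpace.IsTopologicalBasis (Set.range U))
    (f : ℕ → Y → ℝ) (hcont : ∀ n, Continuous (f n))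
    (hbnd : ∀ n y, 0 ≤ f n y ∧ f n y ≤ Real.exp (-(n : ℝ)))
    (hsupp : ∀ n, tsupport (f n) ⊆ U n)
    (hsep : ∀ (y : Y) (V : Set Y), IsOpen V → y ∈ V →
      ∃ n, f n y ≠ 0 ∧ tsupport (f n) ⊆ V) :
    (∀ x y : Y, ⨆ n, |f n x - f n y| = ⨆ n, |f n y - f n x|) ∧
    (∀ x y : Y, (⨆ n, |f n x - f n y|) = 0 ↔ x = y) ∧
    (∀ x y z : Y, (⨆ n, |f n x - f n z|) ≤
      (⨆ n, |f n x - f n y|) + ⨆ n, |f n y - f n z|) ∧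
    (∀ (x : Y) (s : Set Y), s ∈ nhds x ↔
      ∃ ε > (0:ℝ), {y : Y | (⨆ n, |f n x - f n y|) < ε} ⊆ s) := by
  -- basic bound
  have hterm : ∀ n (x y : Y), |f n x - f n y| ≤ Real.exp (-(n : ℝ)) := by
    intro n x y
    rw [abs_sub_le_iff]
    constructor
    · have := (hbnd n x).2
      have := (hbnd n y).1
      linarith
    · have := (hbnd n y).2
      have := (hbnd n x).1
      linarith
  have hbdd : ∀ x y : Y, BddAbove (Set.range fun n => |f n x - f n y|) := by
    intro x y
    refine ⟨1, ?_⟩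
    rintro _ ⟨n, rfl⟩
    calc |f n x - f n y| ≤ Real.exp (-(n : ℝ)) := hterm n x y
      _ ≤ Real.exp 0 := Real.exp_le_exp.2 (neg_nonpos.2 (Nat.cast_nonneg n))
      _ = 1 := Real.exp_zero
  have hnonneg : ∀ x y : Y, 0 ≤ ⨆ n, |f n x - f n y| :=
    fun x y => Real.iSup_nonneg fun n => abs_nonneg _
  have hle : ∀ n (x y : Y), |f n x - f n y| ≤ ⨆ n, |f n x - f n y| :=
    fun n x y => le_ciSup (hbdd x y) n
  refine ⟨fun x y => by simp only [abs_sub_comm (f _ x)], ?_, ?_, ?_⟩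
  · -- D = 0 iff eq
    intro x y
    constructor
    · intro h
      by_contra hxy
      obtain ⟨n, hfx, hsub⟩ := hsep x {y}ᶜ (isOpen_compl_singleton) (by simpa using hxy)
      have hfy : f n y = 0 := by
        by_contra hfy
        exact (hsub (subset_tsupport _ hfy)) rfl
      have : |f n x - f n y| ≤ 0 := h ▸ hle n x y
      rw [hfy, sub_zero] at this
      exact hfx (abs_eq_zero.1 (le_antisymm this (abs_nonneg _)))
    · rintro rfl
      exact le_antisymm (ciSup_le fun n => by simp) (hnonneg x x)
  · -- triangle
    intro x y z
    refine ciSup_le fun n => ?_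
    calc |f n x - f n z| ≤ |f n x - f n y| + |f n y - f n z| := abs_sub_le _ _ _
      _ ≤ _ := add_le_add (hle n x y) (hle n y z)
  · -- topology
    intro x s
    constructor
    · intro hs
      obtain ⟨V, hVs, hV, hxV⟩ := mem_nhds_iff.1 hs
      obtain ⟨n, hfx, hsub⟩ := hsep x V hV hxV
      have hpos : 0 < f n x := lt_of_le_of_ne (hbnd n x).1 (Ne.symm hfx)
      refine ⟨f n x, hpos, fun y hy => ?_⟩
      have h1 : |f n x - f n y| < f n x := lt_of_le_of_lt (hle n x y) hy
      have hfy : f n y ≠ 0 := by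
        rintro h0
        rw [h0, sub_zero, abs_of_pos hpos] at h1
        exact lt_irrefl _ h1
      exact hVs (hsub (subset_tsupport _ hfy))
    · rintro ⟨ε, hε, hball⟩
      refine Filter.mem_of_superset ?_ hball
      obtain ⟨N, hN⟩ := exists_nat_one_div_lt (half_pos hε)
      have hWopen : IsOpen (⋂ n ∈ Finset.range (N + 1),
          {y : Y | |f n x - f n y| < ε / 2}) := by
        refine isOpen_biInter_finset fun n _ => ?_
        have : Continuous fun y => |f n x - f n y| :=
          (continuous_const.sub (hcont n)).abs
        exact isOpen_lt this continuous_const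
      have hxW : x ∈ ⋂ n ∈ Finset.range (N + 1),
          {y : Y | |f n x - f n y| < ε / 2} := by
        simp only [mem_iInter, mem_setOf_eq]
        intro n _
        simpa using half_pos hε
      refine Filter.mem_of_superset (hWopen.mem_nhds hxW) ?_
      intro y hy
      simp only [mem_iInter, mem_setOf_eq, Finset.mem_range] at hy
      have hsup : (⨆ n, |f n x - f n y|) ≤ ε / 2 := by
        refine ciSup_le fun n => ?_
        rcases le_or_gt n N with hn | hn
        · exact (hy n (Nat.lt_succ_of_le hn)).le
        · have h1 : |f n x - f n y| ≤ Real.exp (-(n : ℝ)) := hterm n x y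
          have h2 : Real.exp (-(n : ℝ)) ≤ 1 / ((n : ℝ) + 1) := by
            rw [Real.exp_neg, one_div]
            refine inv_anti₀ (by positivity) ?_
            have := Real.add_one_le_exp (n : ℝ)
            linarith
          have h3 : (1 : ℝ) / ((n : ℝ) + 1) ≤ 1 / ((N : ℝ) + 1) := by
            apply one_div_le_one_div_of_le (by positivity)
            exact_mod_cast Nat.succ_le_succ hn.le
          linarith [hN]
      exact lt_of_le_of_lt hsup (half_lt_self hε)
end
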